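/- For every extended context-free hedge automaton A with collapsing transitions over an unranked alphabet Σ, there exists a context-free hedge automaton A' without collapsing transitions such that the set of terms (hedges of length one) accepted by A' equals the set of terms accepted by A. -/

import Mathlib

/-!
Collapsing transitions only rewrite words of sibling states, so they can be pushed into the
horizontal languages: replace each transition `a(L) → q` by `a(L↑) → q`, where `L↑` is the set
of state words that collapse into a word of `L`, and make final every state that collapses to a
final state. Any run of `A` factors into a collapse-free run followed by collapses of the
resulting top-level word of states; on a single term that word is a single state.

`L↑` is context-free: a grammar for it extends a grammar for `L` by a nonterminal `N_q` for each
state `q`, with rules `N_q → q` and, for each collapsing transition `Lᵢ → q`, `N_q → Sᵢ` where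
`Sᵢ` starts a grammar for `Lᵢ` whose terminals `p` are read as `N_p`.
-/

/-- Unranked terms over an alphabet `α`. -/
inductive UTerm (α : Type) : Type
  | node : α → List (UTerm α) → UTerm α

/-- A context-free hedge automaton extended with collapsing transitions:
ordinary transitions `a(L) → q` and collapsing transitions `L → q`, all with
context-free horizontal languages `L ⊆ Q*`. -/
structure ECFHA (α Q : Type) where
  final : Set Q
  trans : List (α × Language Q × Q)
  collapse : List (Language Q × Q)
  cf : ∀ r ∈ trans, r.2.1.IsContextFree
  cfCollapse : ∀ r ∈ collapse, r.1.IsContextFree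

/-- A state viewed as a leaf of a mixed hedge over `Σ ∪ Q`. -/
def stLeaf {α Q : Type} (q : Q) : UTerm (α ⊕ Q) := UTerm.node (Sum.inr q) []

mutual
  /-- Embedding of a term over `Σ` into mixed terms over `Σ ∪ Q`. -/
  def embedT {α Q : Type} : UTerm α → UTerm (α ⊕ Q)
    | UTerm.node a ts => UTerm.node (Sum.inl a) (embedH ts)
  /-- Embedding of hedges. -/
  def embedH {α Q : Type} : List (UTerm α) → List (UTerm (α ⊕ Q))
    | [] => []
    | t :: ts => embedT t :: embedH ts
end

/-- The move relation of an extended CF-HA on mixed hedges over `Σ ∪ Q`: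
an ordinary transition rewrites `a(q₁…qₙ)` with `q₁…qₙ ∈ L` into `q`,
a collapsing transition rewrites a consecutive subhedge `q₁…qₙ ∈ L` into `q`,
and steps may be applied in any context. -/
inductive ECFHA.Move {α Q : Type} (A : ECFHA α Q) :
    List (UTerm (α ⊕ Q)) → List (UTerm (α ⊕ Q)) → Prop
  | trans {a : α} {L : Language Q} {q : Q} {qs : List Q} :
      (a, L, q) ∈ A.trans → qs ∈ L →
      A.Move [UTerm.node (Sum.inl a) (qs.map stLeaf)] [stLeaf q]
  | collapse {L : Language Q} {q : Q} {qs : List Q} :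
      (L, q) ∈ A.collapse → qs ∈ L →
      A.Move (qs.map stLeaf) [stLeaf q]
  | context {u v h h' : List (UTerm (α ⊕ Q))} :
      A.Move h h' → A.Move (u ++ h ++ v) (u ++ h' ++ v)
  | under {f : α ⊕ Q} {h h' : List (UTerm (α ⊕ Q))} :
      A.Move h h' → A.Move [UTerm.node f h] [UTerm.node f h']

/-- The set of terms (hedges of length one) accepted by an extended CF-HA. -/
def ECFHA.termLang {α Q : Type} (A : ECFHA α Q) : Set (UTerm α) :=
  { t | ∃ q ∈ A.final, Relation.ReflTransGen A.Move [embedT t] [stLeaf q] }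

open Relation (ReflTransGen)

section CollapseClosure

variable {Q : Type} (R : List (Language Q × Q))

/-- `Collapses R u w`: the word `u` rewrites to `w` by repeatedly replacing a factor in `L` by `q`,
for `(L, q) ∈ R`. -/
inductive Collapses : List Q → List Q → Prop
  | nil : Collapses [] []
  | single (q : Q) : Collapses [q] [q]
  | append {u₁ u₂ w₁ w₂ : List Q} :
      Collapses u₁ w₁ → Collapses u₂ w₂ → Collapses (u₁ ++ u₂) (w₁ ++ w₂)
  | collapse {L : Language Q} {q : Q} {u w : List Q} :
      (L, q) ∈ R → Collapses u w → w ∈ L → Collapses u [q]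

def collapseClosure (L : Language Q) : Language Q :=
  {u | ∃ w ∈ L, Collapses R u w}

variable {R}

namespace Collapses

theorem refl : ∀ u : List Q, Collapses R u u
  | [] => nil
  | q :: u => append (single q) (refl u)

theorem exists_split_singleton {u w₁ w₂ : List Q} {q : Q} (h : Collapses R u [q])
    (hw : [q] = w₁ ++ w₂) :
    ∃ u₁ u₂, u = u₁ ++ u₂ ∧ Collapses R u₁ w₁ ∧ Collapses R u₂ w₂ := by
  obtain ⟨rfl, rfl⟩ | ⟨rfl, rfl⟩ := List.singleton_eq_append_iff.mp hw
  · exact ⟨[], u, rfl, nil, h⟩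
  · exact ⟨u, [], by simp, h, nil⟩

theorem exists_split {u w w₁ w₂ : List Q} (h : Collapses R u w) (hw : w = w₁ ++ w₂) :
    ∃ u₁ u₂, u = u₁ ++ u₂ ∧ Collapses R u₁ w₁ ∧ Collapses R u₂ w₂ := by
  induction h generalizing w₁ w₂ with
  | nil =>
    obtain ⟨rfl, rfl⟩ := List.append_eq_nil_iff.mp hw.symm
    exact ⟨[], [], rfl, nil, nil⟩
  | single q => exact (single q).exists_split_singleton hw
  | collapse hm h hL => exact (collapse hm h hL).exists_split_singleton hw
  | @append u₁ u₂ _ _ h₁ h₂ ih₁ ih₂ =>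
    obtain ⟨c, rfl, rfl⟩ | ⟨c, rfl, rfl⟩ := List.append_eq_append_iff.mp hw
    · obtain ⟨x₁, x₂, rfl, hx₁, hx₂⟩ := ih₂ rfl
      exact ⟨u₁ ++ x₁, x₂, by simp, append h₁ hx₁, hx₂⟩
    · obtain ⟨x₁, x₂, rfl, hx₁, hx₂⟩ := ih₁ rfl
      exact ⟨x₁, x₂ ++ u₂, by simp, hx₁, append hx₂ h₂⟩

theorem trans {u v w : List Q} (huv : Collapses R u v) (hvw : Collapses R v w) :
    Collapses R u w := by
  induction hvw generalizing u with
  | nil | single _ => exact huv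
  | append _ _ ih₁ ih₂ =>
    obtain ⟨u₁, u₂, rfl, hu₁, hu₂⟩ := huv.exists_split rfl
    exact append (ih₁ hu₁) (ih₂ hu₂)
  | collapse hm _ hL ih => exact collapse hm (ih huv) hL

theorem eq_of_nil {u w : List Q} (h : Collapses [] u w) : u = w := by
  induction h with
  | nil | single _ => rfl
  | append _ _ ih₁ ih₂ => rw [ih₁, ih₂]
  | collapse hm => simp at hm

end Collapses

theorem le_collapseClosure (L : Language Q) : L ≤ collapseClosure R L :=
  fun u hu => ⟨u, hu, Collapses.refl u⟩

theorem collapseClosure_mono {L L' : Language Q} (h : L ≤ L') :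
    collapseClosure R L ≤ collapseClosure R L' :=
  fun _ ⟨w, hw, hu⟩ => ⟨w, h hw, hu⟩

theorem collapseClosure_mul_le (L L' : Language Q) :
    collapseClosure R L * collapseClosure R L' ≤ collapseClosure R (L * L') := by
  rintro _ ⟨u, ⟨w, hw, hu⟩, u', ⟨w', hw', hu'⟩, rfl⟩
  exact ⟨w ++ w', Language.append_mem_mul hw hw', hu.append hu'⟩

theorem prod_map_collapseClosure_le :
    ∀ l : List (Language Q), (l.map (collapseClosure R)).prod ≤ collapseClosure R l.prod
  | [] => le_collapseClosure 1
  | L :: l => by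
    simp only [List.map_cons, List.prod_cons]
    exact (mul_le_mul' le_rfl (prod_map_collapseClosure_le l)).trans
      (collapseClosure_mul_le L l.prod)

theorem collapseClosure_le_of_mem {L : Language Q} {q : Q} (h : (L, q) ∈ R) :
    collapseClosure R L ≤ collapseClosure R {[q]} :=
  fun _ ⟨_, hw, hu⟩ => ⟨[q], rfl, Collapses.collapse h hu hw⟩

end CollapseClosure

namespace ContextFreeGrammar

variable {T N : Type}

def symbolLanguage (M : N → Language T) : Symbol T N → Language T
  | .terminal t => {[t]}
  | .nonterminal n => M n

def stringLanguage (M : N → Language T) (s : List (Symbol T N)) : Language T :=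
  (s.map (symbolLanguage M)).prod

def ntLanguage (g : ContextFreeGrammar T) (n : g.NT) : Language T :=
  {w | g.Derives [.nonterminal n] (w.map .terminal)}

theorem ntLanguage_initial (g : ContextFreeGrammar T) : g.ntLanguage g.initial = g.language :=
  rfl

theorem stringLanguage_append (M : N → Language T) (s s' : List (Symbol T N)) :
    stringLanguage M (s ++ s') = stringLanguage M s * stringLanguage M s' := by
  simp [stringLanguage]

theorem stringLanguage_singleton (M : N → Language T) (x : Symbol T N) :
    stringLanguage M [x] = symbolLanguage M x := by
  simp [stringLanguage]

theorem mem_stringLanguage_map_terminal (M : N → Language T) :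
    ∀ u : List T, u ∈ stringLanguage M (u.map .terminal)
  | [] => Language.nil_mem_one
  | t :: u => Language.append_mem_mul (l := {[t]}) rfl (mem_stringLanguage_map_terminal M u)

variable {g : ContextFreeGrammar T}

theorem mem_stringLanguage_of_derives {M : g.NT → Language T}
    (hM : ∀ r ∈ g.rules, stringLanguage M r.output ≤ M r.input)
    {x : List (Symbol T g.NT)} {u : List T} (h : g.Derives x (u.map .terminal)) :
    u ∈ stringLanguage M x := by
  induction h using Relation.ReflTransGen.head_induction_on with
  | refl => exact mem_stringLanguage_map_terminal M u
  | head hstep _ ih =>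
    obtain ⟨r, hr, hrw⟩ := hstep
    obtain ⟨p, s, rfl, rfl⟩ := hrw.exists_parts
    simp only [stringLanguage_append, stringLanguage_singleton] at ih ⊢
    exact mul_le_mul' (mul_le_mul' le_rfl (hM r hr)) le_rfl ih

theorem derives_of_mem_stringLanguage :
    ∀ {x : List (Symbol T g.NT)} {u : List T}, u ∈ stringLanguage g.ntLanguage x →
      g.Derives x (u.map .terminal)
  | [], _, hu => by rw [(Language.mem_one _).mp hu]; exact Derives.refl []
  | x :: s, _, hu => by
    obtain ⟨u₁, hu₁, u₂, hu₂, rfl⟩ := Language.mem_mul.mp hu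
    have hx : g.Derives [x] (u₁.map .terminal) := by
      cases x with
      | terminal t => rw [show u₁ = [t] from hu₁]; exact Derives.refl _
      | nonterminal n => exact hu₁
    rw [List.map_append]
    exact (hx.append_right s).trans ((derives_of_mem_stringLanguage hu₂).append_left _)

theorem stringLanguage_output_le {r : ContextFreeRule T g.NT} (hr : r ∈ g.rules) :
    stringLanguage g.ntLanguage r.output ≤ g.ntLanguage r.input := fun _ hu =>
  (Produces.single ⟨r, hr, ContextFreeRule.Rewrites.input_output⟩).trans
    (derives_of_mem_stringLanguage hu)

variable {N' : Type}

def liftSymbol (fT : T → N') (fN : N → N') : Symbol T N → Symbol T N'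
  | .terminal t => .nonterminal (fT t)
  | .nonterminal n => .nonterminal (fN n)

def liftRule (fT : T → N') (fN : N → N') (r : ContextFreeRule T N) : ContextFreeRule T N' :=
  ⟨fN r.input, r.output.map (liftSymbol fT fN)⟩

theorem Derives.lift {g g' : ContextFreeGrammar T} {fT : T → g'.NT} {fN : g.NT → g'.NT}
    (hr : ∀ r ∈ g.rules, liftRule fT fN r ∈ g'.rules) {u v : List (Symbol T g.NT)}
    (h : g.Derives u v) : g'.Derives (u.map (liftSymbol fT fN)) (v.map (liftSymbol fT fN)) := by
  refine Relation.ReflTransGen.lift _ (fun x y ⟨r, hrmem, hrw⟩ => ?_) _ _ h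
  obtain ⟨p, s, rfl, rfl⟩ := hrw.exists_parts
  refine ⟨liftRule fT fN r, hr r hrmem, ?_⟩
  simpa [liftRule, liftSymbol] using (liftRule fT fN r).rewrites_of_exists_parts
    (p.map (liftSymbol fT fN)) (s.map (liftSymbol fT fN))

end ContextFreeGrammar

section CollapseGrammar

open ContextFreeGrammar

theorem stringLanguage_liftRule_le {Q : Type} {R : List (Language Q × Q)}
    {g : ContextFreeGrammar Q} {N : Type} {fT : Q → N} {fN : g.NT → N} {M : N → Language Q}
    (hT : ∀ q, M (fT q) = collapseClosure R {[q]})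
    (hN : ∀ n, M (fN n) = collapseClosure R (g.ntLanguage n))
    {r : ContextFreeRule Q g.NT} (hr : r ∈ g.rules) :
    stringLanguage M (liftRule fT fN r).output ≤ M (liftRule fT fN r).input := by
  have hsymbol : ∀ x, symbolLanguage M (liftSymbol fT fN x) =
      collapseClosure R (symbolLanguage g.ntLanguage x) := by
    rintro (q | n)
    exacts [hT q, hN n]
  calc stringLanguage M (liftRule fT fN r).output
      = ((r.output.map (symbolLanguage g.ntLanguage)).map (collapseClosure R)).prod := by
        simp only [stringLanguage, liftRule, List.map_map]
        exact congrArg List.prod (List.map_congr_left fun x _ => hsymbol x)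
    _ ≤ collapseClosure R (stringLanguage g.ntLanguage r.output) :=
        prod_map_collapseClosure_le _
    _ ≤ M (liftRule fT fN r).input := by
        rw [liftRule, hN]
        exact collapseClosure_mono (stringLanguage_output_le hr)

variable {Q : Type} [Fintype Q] (R : List (Language Q × Q)) (g₀ : ContextFreeGrammar Q)
  (G : Fin R.length → ContextFreeGrammar Q)

/-- Besides the nonterminals of `g₀` and of the grammars `G i` for the collapse languages, there
is one nonterminal per state `q`, generating the words that collapse to `q`. -/
abbrev CollapseNT : Type := g₀.NT ⊕ Q ⊕ (Σ i, (G i).NT)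

variable {g₀ G} in
def stateNT (q : Q) : CollapseNT R g₀ G := .inr (.inl q)

variable {g₀} in
def componentNT (i : Fin R.length) (n : (G i).NT) : CollapseNT R g₀ G := .inr (.inr ⟨i, n⟩)

-- An `abbrev`, so that `(collapseGrammar R g₀ G).NT` unfolds to `CollapseNT R g₀ G` during
-- unification and instance search.
open scoped Classical in
noncomputable abbrev collapseGrammar : ContextFreeGrammar Q where
  NT := CollapseNT R g₀ G
  initial := .inl g₀.initial
  rules :=
    g₀.rules.image (liftRule (stateNT R) .inl) ∪
    Finset.univ.image (fun q => ⟨stateNT R q, [.terminal q]⟩) ∪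
    Finset.univ.image
      (fun i => ⟨stateNT R R[i].2, [.nonterminal (componentNT R G i (G i).initial)]⟩) ∪
    Finset.univ.biUnion (fun i => (G i).rules.image (liftRule (stateNT R) (componentNT R G i)))

def collapseInterpretation : CollapseNT R g₀ G → Language Q
  | .inl n => collapseClosure R (g₀.ntLanguage n)
  | .inr (.inl q) => collapseClosure R {[q]}
  | .inr (.inr ⟨i, n⟩) => collapseClosure R ((G i).ntLanguage n)

variable {R g₀ G}

open scoped Classical in
theorem mem_collapseGrammar_rules {r : ContextFreeRule Q (CollapseNT R g₀ G)} :
    r ∈ (collapseGrammar R g₀ G).rules ↔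
      (∃ r₀ ∈ g₀.rules, liftRule (stateNT R) .inl r₀ = r) ∨
      (∃ q, ⟨stateNT R q, [.terminal q]⟩ = r) ∨
      (∃ i, ⟨stateNT R R[i].2, [.nonterminal (componentNT R G i (G i).initial)]⟩ = r) ∨
      ∃ i, ∃ r₀ ∈ (G i).rules, liftRule (stateNT R) (componentNT R G i) r₀ = r := by
  show r ∈ _ ∪ _ ∪ _ ∪ _ ↔ _
  simp only [Finset.mem_union, Finset.mem_image, Finset.mem_biUnion, Finset.mem_univ, true_and,
    or_assoc]

theorem mem_collapseClosure_of_mem_collapseGrammar (hG : ∀ i, (G i).language = R[i].1)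
    {u : List Q} (hu : u ∈ (collapseGrammar R g₀ G).language) :
    u ∈ collapseClosure R g₀.language := by
  have key := mem_stringLanguage_of_derives (M := collapseInterpretation R g₀ G) ?_ hu
  · rwa [stringLanguage_singleton] at key
  intro r hr
  rcases mem_collapseGrammar_rules.mp hr with
    ⟨r₀, hr₀, rfl⟩ | ⟨q, rfl⟩ | ⟨i, rfl⟩ | ⟨i, r₀, hr₀, rfl⟩
  · exact stringLanguage_liftRule_le (M := collapseInterpretation R g₀ G) (fun _ => rfl)
      (fun _ => rfl) hr₀
  · dsimp only
    rw [stringLanguage_singleton]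
    exact le_collapseClosure _
  · dsimp only
    rw [stringLanguage_singleton]
    have hle : collapseClosure R R[i].1 ≤ collapseClosure R {[R[i].2]} :=
      collapseClosure_le_of_mem (List.getElem_mem _)
    rwa [← hG i] at hle
  · exact stringLanguage_liftRule_le (M := collapseInterpretation R g₀ G) (fun _ => rfl)
      (fun _ => rfl) hr₀

theorem derives_of_collapses (hG : ∀ i, (G i).language = R[i].1) {u w : List Q}
    (h : Collapses R u w) :
    (collapseGrammar R g₀ G).Derives (w.map fun q => .nonterminal (stateNT R q))
      (u.map .terminal) := by
  induction h with
  | nil => exact Derives.refl _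
  | single q =>
    exact Produces.single ⟨_, mem_collapseGrammar_rules.mpr (.inr (.inl ⟨q, rfl⟩)),
      ContextFreeRule.Rewrites.input_output⟩
  | append _ _ ih₁ ih₂ =>
    simp only [List.map_append]
    exact (ih₁.append_right _).trans (ih₂.append_left _)
  | @collapse L q _ w hm _ hL ih =>
    obtain ⟨i, hi, hRi⟩ := List.getElem_of_mem hm
    have hstart : (collapseGrammar R g₀ G).Produces [.nonterminal (stateNT R q)]
        [.nonterminal (componentNT R G ⟨i, hi⟩ (G ⟨i, hi⟩).initial)] := by
      refine ⟨_, mem_collapseGrammar_rules.mpr (.inr (.inr (.inl ⟨⟨i, hi⟩, rfl⟩))), ?_⟩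
      simp only [Fin.getElem_fin, hRi]
      exact ContextFreeRule.Rewrites.input_output
    have hw : w ∈ (G ⟨i, hi⟩).language := by
      rw [hG]
      simpa [hRi] using hL
    have hlift := Derives.lift (g' := collapseGrammar R g₀ G) (fT := stateNT R)
      (fN := componentNT R G ⟨i, hi⟩)
      (fun r hr => mem_collapseGrammar_rules.mpr (.inr (.inr (.inr ⟨_, r, hr, rfl⟩)))) hw
    simp only [List.map_map, List.map_cons, List.map_nil] at hlift
    exact (hstart.trans_derives hlift).trans ih

theorem mem_collapseGrammar_of_mem_collapseClosure (hG : ∀ i, (G i).language = R[i].1)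
    {u : List Q} (hu : u ∈ collapseClosure R g₀.language) :
    u ∈ (collapseGrammar R g₀ G).language := by
  obtain ⟨w, hw, hu⟩ := hu
  have hlift := Derives.lift (g' := collapseGrammar R g₀ G) (fT := stateNT R) (fN := .inl)
    (fun r hr => mem_collapseGrammar_rules.mpr (.inl ⟨r, hr, rfl⟩)) hw
  simp only [List.map_map, List.map_cons, List.map_nil] at hlift
  exact hlift.trans (derives_of_collapses hG hu)

end CollapseGrammar

theorem Language.IsContextFree.collapseClosure {Q : Type} [Fintype Q]
    {R : List (Language Q × Q)} (hR : ∀ r ∈ R, r.1.IsContextFree) {L : Language Q}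
    (hL : L.IsContextFree) : (collapseClosure R L).IsContextFree := by
  obtain ⟨g₀, rfl⟩ := hL
  choose G hG using fun i : Fin R.length => hR R[i] (List.getElem_mem _)
  exact ⟨collapseGrammar R g₀ G, Language.ext fun _ =>
    ⟨mem_collapseClosure_of_mem_collapseGrammar hG,
      mem_collapseGrammar_of_mem_collapseClosure hG⟩⟩

namespace ECFHA

variable {α Q : Type}

/-- Big-step semantics of `A.Move`: `A.Eval h w` holds when the hedge `h` reduces to the
states `w`. -/
inductive Eval (A : ECFHA α Q) : List (UTerm (α ⊕ Q)) → List Q → Prop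
  | nil : Eval A [] []
  | leaf (q : Q) : Eval A [stLeaf q] [q]
  | append {h₁ h₂ w₁ w₂} : Eval A h₁ w₁ → Eval A h₂ w₂ → Eval A (h₁ ++ h₂) (w₁ ++ w₂)
  | node {a L q h w} : (a, L, q) ∈ A.trans → Eval A h w → w ∈ L →
      Eval A [UTerm.node (Sum.inl a) h] [q]
  | collapses {h u w} : Eval A h u → Collapses A.collapse u w → Eval A h w

variable {A : ECFHA α Q}

namespace Eval

theorem map_stLeaf : ∀ w : List Q, A.Eval (w.map stLeaf) w
  | [] => nil
  | q :: w => append (leaf q) (map_stLeaf w)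

theorem collapses_of_map_stLeaf {h : List (UTerm (α ⊕ Q))} {u w : List Q} (hw : A.Eval h w)
    (hu : h = u.map stLeaf) : Collapses A.collapse u w := by
  induction hw generalizing u with
  | nil => rw [List.map_eq_nil_iff.mp hu.symm]; exact .nil
  | leaf q =>
    obtain ⟨q', rfl, hq'⟩ := List.map_eq_singleton_iff.mp hu.symm
    cases hq'
    exact .single q
  | append _ _ ih₁ ih₂ =>
    obtain ⟨u₁, u₂, rfl, hu₁, hu₂⟩ := List.map_eq_append_iff.mp hu.symm
    exact (ih₁ hu₁.symm).append (ih₂ hu₂.symm)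
  | node =>
    obtain ⟨_, -, hq⟩ := List.map_eq_singleton_iff.mp hu.symm
    cases hq
  | collapses _ hc ih => exact (ih hu).trans hc

end Eval

theorem eval_map_stLeaf_iff {u w : List Q} :
    A.Eval (u.map stLeaf) w ↔ Collapses A.collapse u w :=
  ⟨fun h => h.collapses_of_map_stLeaf rfl, (Eval.map_stLeaf u).collapses⟩

namespace Eval

theorem exists_split_singleton {x : UTerm (α ⊕ Q)} {k₁ k₂ : List (UTerm (α ⊕ Q))} {w : List Q}
    (hw : A.Eval [x] w) (hk : [x] = k₁ ++ k₂) :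
    ∃ w₁ w₂, A.Eval k₁ w₁ ∧ A.Eval k₂ w₂ ∧ Collapses A.collapse (w₁ ++ w₂) w := by
  obtain ⟨rfl, rfl⟩ | ⟨rfl, rfl⟩ := List.singleton_eq_append_iff.mp hk
  · exact ⟨[], w, nil, hw, Collapses.refl w⟩
  · exact ⟨w, [], hw, nil, by simpa using Collapses.refl w⟩

theorem exists_split {h k₁ k₂ : List (UTerm (α ⊕ Q))} {w : List Q} (hw : A.Eval h w)
    (hk : h = k₁ ++ k₂) :
    ∃ w₁ w₂, A.Eval k₁ w₁ ∧ A.Eval k₂ w₂ ∧ Collapses A.collapse (w₁ ++ w₂) w := by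
  induction hw generalizing k₁ k₂ with
  | nil =>
    obtain ⟨rfl, rfl⟩ := List.append_eq_nil_iff.mp hk.symm
    exact ⟨[], [], nil, nil, .nil⟩
  | leaf q => exact (leaf q).exists_split_singleton hk
  | node hm hw hL => exact (node hm hw hL).exists_split_singleton hk
  | @append h₁ h₂ w₁ w₂ hw₁ hw₂ ih₁ ih₂ =>
    obtain ⟨c, rfl, rfl⟩ | ⟨c, rfl, rfl⟩ := List.append_eq_append_iff.mp hk
    · obtain ⟨v₁, v₂, hv₁, hv₂, hc⟩ := ih₂ rfl
      refine ⟨w₁ ++ v₁, v₂, hw₁.append hv₁, hv₂, ?_⟩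
      simpa using (Collapses.refl w₁).append hc
    · obtain ⟨v₁, v₂, hv₁, hv₂, hc⟩ := ih₁ rfl
      refine ⟨v₁, v₂ ++ w₂, hv₁, hv₂.append hw₂, ?_⟩
      simpa using hc.append (Collapses.refl w₂)
  | collapses _ hc ih =>
    obtain ⟨w₁, w₂, hw₁, hw₂, hc'⟩ := ih hk
    exact ⟨w₁, w₂, hw₁, hw₂, hc'.trans hc⟩

end Eval

theorem Move.ne_nil {h h' : List (UTerm (α ⊕ Q))} (hm : A.Move h h') : h' ≠ [] := by
  induction hm <;> simp_all

theorem moves_append {h₁ h₁' h₂ h₂' : List (UTerm (α ⊕ Q))}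
    (hm₁ : ReflTransGen A.Move h₁ h₁') (hm₂ : ReflTransGen A.Move h₂ h₂') :
    ReflTransGen A.Move (h₁ ++ h₂) (h₁' ++ h₂') := by
  refine (hm₁.lift (· ++ h₂) fun x y hxy => ?_).trans (hm₂.lift (h₁' ++ ·) fun x y hxy => ?_)
  · simpa using Move.context (u := []) (v := h₂) hxy
  · simpa using Move.context (u := h₁') (v := []) hxy

theorem moves_of_collapses {u w : List Q} (h : Collapses A.collapse u w) :
    ReflTransGen A.Move (u.map stLeaf) (w.map stLeaf) := by
  induction h with
  | nil | single _ => exact .refl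
  | append _ _ ih₁ ih₂ => simpa using moves_append ih₁ ih₂
  | collapse hm _ hL ih => exact ih.tail (Move.collapse hm hL)

theorem Eval.moves {h : List (UTerm (α ⊕ Q))} {w : List Q} (hw : A.Eval h w) :
    ReflTransGen A.Move h (w.map stLeaf) := by
  induction hw with
  | nil | leaf _ => exact .refl
  | append _ _ ih₁ ih₂ => simpa using moves_append ih₁ ih₂
  | node hm _ hL ih =>
    exact (ih.lift (fun x => [UTerm.node _ x]) fun _ _ => Move.under).tail (Move.trans hm hL)
  | collapses _ hc ih => exact ih.trans (moves_of_collapses hc)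

theorem Eval.subst_infix {g g' u v : List (UTerm (α ⊕ Q))} {w : List Q}
    (hsub : ∀ w, A.Eval g' w → A.Eval g w) (hw : A.Eval (u ++ g' ++ v) w) :
    A.Eval (u ++ g ++ v) w := by
  obtain ⟨w₁, w₂₃, hu, hg'v, hc₁⟩ := hw.exists_split (List.append_assoc u g' v)
  obtain ⟨w₂, w₃, hg', hv, hc₂⟩ := hg'v.exists_split rfl
  have hc : Collapses A.collapse (w₁ ++ (w₂ ++ w₃)) w :=
    ((Collapses.refl w₁).append hc₂).trans hc₁
  rw [← List.append_assoc] at hc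
  exact ((hu.append (hsub w₂ hg')).append hv).collapses hc

theorem Eval.subst_children {g g' k : List (UTerm (α ⊕ Q))} {f : α ⊕ Q} {w : List Q}
    (hsub : ∀ w, A.Eval g' w → A.Eval g w) (hg' : g' ≠ []) (hw : A.Eval k w)
    (hk : k = [UTerm.node f g']) : A.Eval [UTerm.node f g] w := by
  induction hw with
  | nil => cases hk
  | leaf q => cases hk; exact absurd rfl hg'
  | @append h₁ h₂ _ _ hw₁ hw₂ ih₁ ih₂ =>
    obtain ⟨rfl, rfl⟩ | ⟨rfl, rfl⟩ := List.append_eq_singleton_iff.mp hk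
    · exact hw₁.append (ih₂ rfl)
    · simpa using (ih₁ rfl).append hw₂
  | node hm hw hL =>
    cases hk
    exact node hm (hsub _ hw) hL
  | collapses _ hc ih => exact (ih hk).collapses hc

theorem Move.eval {h h' : List (UTerm (α ⊕ Q))} (hm : A.Move h h') :
    ∀ w, A.Eval h' w → A.Eval h w := by
  induction hm with
  | @trans _ _ q qs hm hL =>
    exact fun w hw => (Eval.node hm (Eval.map_stLeaf qs) hL).collapses
      (eval_map_stLeaf_iff (u := [q]).mp hw)
  | @collapse _ _ qs hm hL =>
    exact fun w hw => eval_map_stLeaf_iff.mpr <|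
      (Collapses.collapse hm (Collapses.refl qs) hL).trans (eval_map_stLeaf_iff (u := [_]).mp hw)
  | context _ ih => exact fun w hw => Eval.subst_infix ih hw
  | under hm ih => exact fun w hw => Eval.subst_children ih hm.ne_nil hw rfl

theorem moves_iff_eval {h : List (UTerm (α ⊕ Q))} {w : List Q} :
    ReflTransGen A.Move h (w.map stLeaf) ↔ A.Eval h w := by
  refine ⟨fun hm => ?_, Eval.moves⟩
  induction hm using Relation.ReflTransGen.head_induction_on with
  | refl => exact Eval.map_stLeaf w
  | head hstep _ ih => exact hstep.eval w ih

theorem mem_termLang_iff {t : UTerm α} :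
    t ∈ A.termLang ↔ ∃ q ∈ A.final, A.Eval [embedT t] [q] :=
  exists_congr fun q => and_congr_right fun _ => moves_iff_eval (w := [q])

theorem Eval.length_eq (hA : A.collapse = []) {h : List (UTerm (α ⊕ Q))}
    {w : List Q} (hw : A.Eval h w) : w.length = h.length := by
  induction hw with
  | nil | leaf _ | node => rfl
  | append _ _ ih₁ ih₂ => simp [ih₁, ih₂]
  | collapses _ hc ih =>
    rw [hA] at hc
    rw [← hc.eq_of_nil, ih]

noncomputable def decollapse (A : ECFHA α Q) [Fintype Q] : ECFHA α Q where
  final := {q' | ∃ q ∈ A.final, Collapses A.collapse [q'] [q]}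
  trans := A.trans.map fun r => (r.1, collapseClosure A.collapse r.2.1, r.2.2)
  collapse := []
  cf := by
    simp only [List.mem_map]
    rintro _ ⟨r, hr, rfl⟩
    exact (A.cf r hr).collapseClosure A.cfCollapse
  cfCollapse := by simp

variable [Fintype Q]

theorem Eval.of_decollapse {h : List (UTerm (α ⊕ Q))} {w : List Q}
    (hw : A.decollapse.Eval h w) : A.Eval h w := by
  induction hw with
  | nil => exact nil
  | leaf q => exact leaf q
  | append _ _ ih₁ ih₂ => exact ih₁.append ih₂
  | node hm _ hL ih =>
    obtain ⟨⟨a, L, q⟩, hr, hEq⟩ := List.mem_map.mp hm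
    cases hEq
    obtain ⟨w', hw', hc⟩ := hL
    exact node hr (ih.collapses hc) hw'
  | collapses _ hc ih => rwa [← hc.eq_of_nil]

theorem Eval.exists_decollapse {h : List (UTerm (α ⊕ Q))} {w : List Q} (hw : A.Eval h w) :
    ∃ u, A.decollapse.Eval h u ∧ Collapses A.collapse u w := by
  induction hw with
  | nil => exact ⟨[], nil, .nil⟩
  | leaf q => exact ⟨[q], leaf q, .single q⟩
  | append _ _ ih₁ ih₂ =>
    obtain ⟨u₁, hu₁, hc₁⟩ := ih₁
    obtain ⟨u₂, hu₂, hc₂⟩ := ih₂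
    exact ⟨u₁ ++ u₂, hu₁.append hu₂, hc₁.append hc₂⟩
  | @node a L q _ w hm _ hL ih =>
    obtain ⟨u, hu, hc⟩ := ih
    exact ⟨[q], node (List.mem_map.mpr ⟨(a, L, q), hm, rfl⟩) hu ⟨w, hL, hc⟩, .single q⟩
  | collapses _ hc ih =>
    obtain ⟨u, hu, hc'⟩ := ih
    exact ⟨u, hu, hc'.trans hc⟩

theorem termLang_decollapse : A.decollapse.termLang = A.termLang := by
  ext t
  simp only [mem_termLang_iff]
  constructor
  · rintro ⟨q', ⟨q, hq, hc⟩, hev⟩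
    exact ⟨q, hq, hev.of_decollapse.collapses hc⟩
  · rintro ⟨q, hq, hev⟩
    obtain ⟨u, hu, hc⟩ := hev.exists_decollapse
    obtain ⟨q', rfl⟩ : ∃ q', u = [q'] := List.length_eq_one_iff.mp (hu.length_eq rfl)
    exact ⟨q', ⟨q, hq, hc⟩, hu⟩

end ECFHA

/-- for every extended CF-HA with collapsing transitions there is
a CF-HA without collapsing transitions accepting exactly the same terms. -/
theorem ecfha_collapse_elimination {α : Type} [Fintype α] {Q : Type} [Fintype Q]
    (A : ECFHA α Q) :
    ∃ (Q' : Type) (_ : Fintype Q') (A' : ECFHA α Q'),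
      A'.collapse = [] ∧ A'.termLang = A.termLang :=
  ⟨Q, inferInstance, A.decollapse, rfl, ECFHA.termLang_decollapse⟩
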